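/- In the single-excitation sector, the UQI Hamiltonian H = Σ_{i=1}^{N−1} ½(X^a_i X^a_{i+1} + Y^a_i Y^a_{i+1}) ⊗ S^q_{i,i+1} acts as: H(|i⟩^a ⊗ |ψ⟩^q) = |i−1⟩^a ⊗ S_{i−1,i}†|ψ⟩ + |i+1⟩^a ⊗ S_{i,i+1}|ψ⟩ (with |0⟩^a and |N+1⟩^a interpreted as 0), where |i⟩^a denotes the state of N head qubits all in |0⟩ except the i-th in |1⟩. Hence the span of states {|i⟩^a⊗|ψ_i⟩ : |ψ_i⟩ = S_{i−1,i}…S_{1,2}|ψ₁⟩} is invariant under H and on it H acts as the path-graph hopping matrix. -/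

import Mathlib

open Matrix

variable (N : ℕ)

/-- Head configuration with a single excitation at site `i`:  all head qubits in
`|0⟩` except the `i`-th, which is in `|1⟩`. -/
def headState (i : Fin N) : (Fin N → Fin 2) → ℂ :=
  fun f => if f = (fun k => if k = i then 1 else 0) then 1 else 0

/-- Tensor product of a head vector and a data vector. -/
def tensorState (φ ψ : (Fin N → Fin 2) → ℂ) :
    ((Fin N → Fin 2) × (Fin N → Fin 2)) → ℂ :=
  fun p => φ p.1 * ψ p.2

/-- The swap `S_{i,j}` of data qubits `i` and `j`, acting on data vectors. -/
def dataSwap (i j : Fin N) (ψ : (Fin N → Fin 2) → ℂ) : (Fin N → Fin 2) → ℂ :=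
  fun g => ψ (g ∘ Equiv.swap i j)

/-- The UQI Hamiltonian `H = Σ_{i=1}^{N−1} ½(X^a_i X^a_{i+1} + Y^a_i Y^a_{i+1}) ⊗
S^q_{i,i+1}`:  on the head qubits each term is the hopping operator
`|01⟩⟨10| + |10⟩⟨01|` at sites `i, i+1`, tensored with the swap of the data qubits
`i, i+1`. -/
noncomputable def uqiH : Matrix ((Fin N → Fin 2) × (Fin N → Fin 2))
    ((Fin N → Fin 2) × (Fin N → Fin 2)) ℂ :=
  fun p q => ∑ i ∈ (Finset.range (N - 1)).attach,
    have hi : i.1 < N - 1 := Finset.mem_range.mp i.2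
    let a : Fin N := ⟨i.1, by omega⟩
    let b : Fin N := ⟨i.1 + 1, by omega⟩
    (if ((p.1 a, p.1 b) = ((0 : Fin 2), (1 : Fin 2)) ∧ (q.1 a, q.1 b) = (1, 0)) ∨
        ((p.1 a, p.1 b) = (1, 0) ∧ (q.1 a, q.1 b) = (0, 1)) then 1 else 0) *
    (if ∀ k, k ≠ a → k ≠ b → p.1 k = q.1 k then 1 else 0) *
    (if p.2 = q.2 ∘ (Equiv.swap a b) then 1 else 0)

/-- `|ψ_i⟩ = S_{i−1,i} ⋯ S_{1,2}|ψ₁⟩` (0-indexed): the data state after the head has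
hopped to site `i`. -/
def iterSwap (ψ : (Fin N → Fin 2) → ℂ) : ℕ → ((Fin N → Fin 2) → ℂ)
  | 0 => ψ
  | k + 1 =>
    if h : k + 1 < N then dataSwap N ⟨k, by omega⟩ ⟨k + 1, h⟩ (iterSwap ψ k)
    else iterSwap ψ k

/-!
Each bond term of `uqiH` is a Kronecker product `h_{a,b} ⊗ S_{a,b}`, so on a product state it
acts factorwise. The hopping factor `h_{a,b}` moves a single excitation from `a` to `b` and back
and annihilates states excited at any other site, so only the (at most two) bonds at the excited
site contribute. The states `|i⟩ ⊗ |ψ_i⟩` are closed under `uqiH` because `S_{i-1,i}` is an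
involution: `S_{i-1,i} |ψ_i⟩ = |ψ_{i-1}⟩`.
-/

theorem Pi.eq_single_iff_of_ne {ι α : Type*} [DecidableEq ι] [Zero α] {a b : ι} (hab : a ≠ b)
    (x : α) (f : ι → α) :
    f = Pi.single b x ↔ f a = 0 ∧ f b = x ∧ ∀ k, k ≠ a → k ≠ b → f k = 0 := by
  constructor
  · rintro rfl
    exact ⟨by simp [hab], by simp, fun k _ hkb ↦ by simp [hkb]⟩
  · rintro ⟨ha, hb, hk⟩
    ext k
    by_cases hka : k = a
    · subst hka; simp [hab, ha]
    · by_cases hkb : k = b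
      · subst hkb; simp [hb]
      · simp [hk k hka hkb, hkb]

section

open scoped Kronecker

variable {N}

/-- `½(X^a_a X^a_b + Y^a_a Y^a_b)`, the head factor of the bond terms of `uqiH`. -/
def hopMatrix (a b : Fin N) : Matrix (Fin N → Fin 2) (Fin N → Fin 2) ℂ :=
  fun f g ↦
    (if ((f a, f b) = ((0 : Fin 2), (1 : Fin 2)) ∧ (g a, g b) = (1, 0)) ∨
        ((f a, f b) = (1, 0) ∧ (g a, g b) = (0, 1)) then 1 else 0) *
    (if ∀ k, k ≠ a → k ≠ b → f k = g k then 1 else 0)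

def swapMatrix (a b : Fin N) : Matrix (Fin N → Fin 2) (Fin N → Fin 2) ℂ :=
  fun f g ↦ if f = g ∘ Equiv.swap a b then 1 else 0

/-- The `dite` only supplies the bound `t + 1 < N`, which holds on all of `range (N - 1)`. -/
def bondSum {M : Type*} [AddCommMonoid M] (G : Fin N → Fin N → M) : M :=
  ∑ t ∈ Finset.range (N - 1), if h : t + 1 < N then G ⟨t, by omega⟩ ⟨t + 1, h⟩ else 0

theorem tensorState_add_left (φ φ' ψ : (Fin N → Fin 2) → ℂ) :
    tensorState N (φ + φ') ψ = tensorState N φ ψ + tensorState N φ' ψ := by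
  ext p
  simp [tensorState, add_mul]

theorem tensorState_zero_left (ψ : (Fin N → Fin 2) → ℂ) :
    tensorState N 0 ψ = 0 := by
  ext p
  simp [tensorState]

theorem kronecker_mulVec_tensorState (A B : Matrix (Fin N → Fin 2) (Fin N → Fin 2) ℂ)
    (φ ψ : (Fin N → Fin 2) → ℂ) :
    (A ⊗ₖ B) *ᵥ tensorState N φ ψ = tensorState N (A *ᵥ φ) (B *ᵥ ψ) := by
  ext p
  simp only [Matrix.mulVec, dotProduct, tensorState, Matrix.kroneckerMap_apply,
    Fintype.sum_prod_type, Finset.sum_mul_sum]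
  exact Finset.sum_congr rfl fun _ _ ↦ Finset.sum_congr rfl fun _ _ ↦ by ring

theorem headState_eq_single (i : Fin N) : headState N i = Pi.single (Pi.single i 1) 1 := by
  ext f
  simp [headState, Pi.single_apply, funext_iff]

theorem hopMatrix_comm (a b : Fin N) : hopMatrix a b = hopMatrix b a := by
  ext f g
  simp only [hopMatrix, Prod.mk.injEq]
  congr 2
  · exact propext ⟨by tauto, by tauto⟩
  · exact propext ⟨fun h k hb ha ↦ h k ha hb, fun h k ha hb ↦ h k hb ha⟩

theorem hopMatrix_apply_single_left {a b : Fin N} (hab : a ≠ b) (f : Fin N → Fin 2) :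
    hopMatrix a b f (Pi.single a 1) = if f = Pi.single b 1 then 1 else 0 := by
  simp +contextual [hopMatrix, Pi.eq_single_iff_of_ne hab, Ne.symm hab, ← and_assoc,
    and_comm (b := ∀ _, _), ite_and]

theorem hopMatrix_apply_single_of_ne {a b i : Fin N} (hai : a ≠ i) (hbi : b ≠ i)
    (f : Fin N → Fin 2) : hopMatrix a b f (Pi.single i 1) = 0 := by
  simp [hopMatrix, hai, hbi]

theorem hopMatrix_mulVec_headState {a b : Fin N} (hab : a ≠ b) (i : Fin N) :
    hopMatrix a b *ᵥ headState N i =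
      (if a = i then headState N b else 0) + (if b = i then headState N a else 0) := by
  ext f
  simp only [headState_eq_single, Matrix.mulVec_single_one, Matrix.col_apply, Pi.add_apply]
  by_cases hai : a = i
  · subst hai
    simp [hopMatrix_apply_single_left hab, Pi.single_apply, Ne.symm hab]
  by_cases hbi : b = i
  · subst hbi
    simp [hopMatrix_comm a b, hopMatrix_apply_single_left (Ne.symm hab), Pi.single_apply, hai]
  simp [hopMatrix_apply_single_of_ne hai hbi, hai, hbi]

theorem swapMatrix_mulVec (a b : Fin N) (φ : (Fin N → Fin 2) → ℂ) :
    swapMatrix a b *ᵥ φ = dataSwap N a b φ := by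
  ext f
  have hswap (g : Fin N → Fin 2) : f = g ∘ Equiv.swap a b ↔ f ∘ Equiv.swap a b = g := by
    simpa using (Equiv.swap a b).eq_comp_symm f g
  simp [swapMatrix, Matrix.mulVec, dotProduct, dataSwap, hswap]

section

variable {M : Type*} [AddCommMonoid M]

theorem bondSum_congr {G G' : Fin N → Fin N → M}
    (h : ∀ a b : Fin N, a.1 + 1 = b.1 → G a b = G' a b) : bondSum G = bondSum G' := by
  refine Finset.sum_congr rfl fun t _ ↦ ?_
  split_ifs
  · exact h _ _ rfl
  · rfl

theorem bondSum_add (G G' : Fin N → Fin N → M) :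
    bondSum (fun a b ↦ G a b + G' a b) = bondSum G + bondSum G' := by
  rw [bondSum, bondSum, bondSum, ← Finset.sum_add_distrib]
  refine Finset.sum_congr rfl fun t _ ↦ ?_
  split_ifs <;> simp

theorem bondSum_ite_left (i : Fin N) (X : Fin N → Fin N → M) :
    bondSum (fun a b ↦ if a = i then X a b else 0) =
      if h : i.1 + 1 < N then X i ⟨i.1 + 1, h⟩ else 0 := by
  rw [bondSum, Finset.sum_eq_single i.1]
  · simp
  · intro t _ hti
    simp [Fin.ext_iff, hti]
  · intro hi
    simp only [Finset.mem_range] at hi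
    simp [show ¬ i.1 + 1 < N by omega]

theorem bondSum_ite_right (i : Fin N) (X : Fin N → Fin N → M) :
    bondSum (fun a b ↦ if b = i then X a b else 0) =
      if 0 < i.1 then X ⟨i.1 - 1, (Nat.sub_le _ _).trans_lt i.2⟩ i else 0 := by
  split_ifs with hi
  · have hsucc : (⟨i.1 - 1 + 1, by omega⟩ : Fin N) = i := Fin.ext (by simp; omega)
    rw [bondSum, Finset.sum_eq_single (i.1 - 1)]
    · simp [hsucc, show i.1 - 1 + 1 < N by omega]
    · intro t _ hti
      simp [Fin.ext_iff, show t + 1 ≠ i.1 by omega]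
    · intro h
      simp only [Finset.mem_range] at h
      omega
  · refine Finset.sum_eq_zero fun t _ ↦ ?_
    simp [Fin.ext_iff, show t + 1 ≠ i.1 by omega]

end

theorem bondSum_mulVec {m n α : Type*} [Fintype n] [NonUnitalNonAssocSemiring α]
    (G : Fin N → Fin N → Matrix m n α) (v : n → α) :
    bondSum G *ᵥ v = bondSum fun a b ↦ G a b *ᵥ v := by
  rw [bondSum, bondSum, Matrix.sum_mulVec]
  refine Finset.sum_congr rfl fun t _ ↦ ?_
  split_ifs <;> simp

theorem uqiH_eq_bondSum : uqiH N = bondSum fun a b ↦ hopMatrix a b ⊗ₖ swapMatrix a b := by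
  rw [bondSum, ← Finset.sum_attach]
  ext p q
  simp only [Matrix.sum_apply]
  refine Finset.sum_congr rfl fun t _ ↦ ?_
  rw [dif_pos]
  rfl

theorem kronecker_mulVec_tensorState_headState {a b : Fin N} (hab : a ≠ b) (i : Fin N)
    (φ : (Fin N → Fin 2) → ℂ) :
    (hopMatrix a b ⊗ₖ swapMatrix a b) *ᵥ tensorState N (headState N i) φ =
      (if a = i then tensorState N (headState N b) (dataSwap N a b φ) else 0) +
        (if b = i then tensorState N (headState N a) (dataSwap N a b φ) else 0) := by
  rw [kronecker_mulVec_tensorState, hopMatrix_mulVec_headState hab, swapMatrix_mulVec,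
    tensorState_add_left]
  split_ifs <;> simp only [tensorState_zero_left]

theorem uqiH_mulVec_tensorState_headState (i : Fin N) (φ : (Fin N → Fin 2) → ℂ) :
    (uqiH N).mulVec (tensorState N (headState N i) φ) =
      (if 0 < i.1 then
          tensorState N (headState N ⟨i.1 - 1, (Nat.sub_le _ _).trans_lt i.2⟩)
            (dataSwap N ⟨i.1 - 1, (Nat.sub_le _ _).trans_lt i.2⟩ i φ)
        else 0) +
      (if h : i.1 + 1 < N then
          tensorState N (headState N ⟨i.1 + 1, h⟩)
            (dataSwap N i ⟨i.1 + 1, h⟩ φ)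
        else 0) := by
  rw [uqiH_eq_bondSum, bondSum_mulVec, bondSum_congr fun a b hab ↦
      kronecker_mulVec_tensorState_headState (Fin.ne_of_val_ne (by omega)) i φ,
    bondSum_add, bondSum_ite_left, bondSum_ite_right, add_comm]

theorem dataSwap_dataSwap (a b : Fin N) (φ : (Fin N → Fin 2) → ℂ) :
    dataSwap N a b (dataSwap N a b φ) = φ := by
  ext g
  simp [dataSwap, Function.comp_def]

theorem iterSwap_succ (ψ : (Fin N → Fin 2) → ℂ) {k : ℕ} (h : k + 1 < N) :
    iterSwap N ψ (k + 1) = dataSwap N ⟨k, by omega⟩ ⟨k + 1, h⟩ (iterSwap N ψ k) :=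
  dif_pos h

theorem dataSwap_iterSwap_succ (ψ : (Fin N → Fin 2) → ℂ) {k : ℕ} (h : k + 1 < N) :
    dataSwap N ⟨k, by omega⟩ ⟨k + 1, h⟩ (iterSwap N ψ (k + 1)) = iterSwap N ψ k := by
  rw [iterSwap_succ ψ h, dataSwap_dataSwap]

theorem uqiH_mulVec_tensorState_iterSwap (ψ : (Fin N → Fin 2) → ℂ) (i : Fin N) :
    (uqiH N).mulVec (tensorState N (headState N i) (iterSwap N ψ i.1)) =
      (if 0 < i.1 then
          tensorState N (headState N ⟨i.1 - 1, (Nat.sub_le _ _).trans_lt i.2⟩)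
            (iterSwap N ψ (i.1 - 1))
        else 0) +
      (if h : i.1 + 1 < N then
          tensorState N (headState N ⟨i.1 + 1, h⟩) (iterSwap N ψ (i.1 + 1))
        else 0) := by
  rw [uqiH_mulVec_tensorState_headState]
  congr 1 <;> split_ifs with h
  · have hswap := dataSwap_iterSwap_succ ψ (k := i.1 - 1) (by omega)
    simp only [Nat.sub_add_cancel h] at hswap
    rw [hswap]
  · rfl
  · rw [iterSwap_succ ψ h]
  · rfl

end

/-- In the single-excitation sector the UQI Hamiltonian acts as
`H(|i⟩^a ⊗ |ψ⟩^q) = |i−1⟩^a ⊗ S_{i−1,i}|ψ⟩ + |i+1⟩^a ⊗ S_{i,i+1}|ψ⟩`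
(terms at the chain ends interpreted as `0`); hence the span of the states
`|i⟩^a ⊗ |ψ_i⟩` with `|ψ_i⟩ = S_{i−1,i}⋯S_{1,2}|ψ₁⟩` is invariant under `H`, on
which `H` acts as the path-graph hopping matrix. -/
theorem uqiH_single_excitation_action (ψ : (Fin N → Fin 2) → ℂ) :
    (∀ (i : Fin N) (φ : (Fin N → Fin 2) → ℂ),
      (uqiH N).mulVec (tensorState N (headState N i) φ) =
        (if h : 0 < i.1 then
            tensorState N (headState N ⟨i.1 - 1, by omega⟩)
              (dataSwap N ⟨i.1 - 1, by omega⟩ i φ)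
          else 0) +
        (if h : i.1 + 1 < N then
            tensorState N (headState N ⟨i.1 + 1, h⟩)
              (dataSwap N i ⟨i.1 + 1, h⟩ φ)
          else 0)) ∧
    (∀ v ∈ Submodule.span ℂ
        (Set.range fun i : Fin N => tensorState N (headState N i) (iterSwap N ψ i.1)),
      (uqiH N).mulVec v ∈ Submodule.span ℂ
        (Set.range fun i : Fin N => tensorState N (headState N i) (iterSwap N ψ i.1))) ∧
    (∀ i : Fin N,
      (uqiH N).mulVec (tensorState N (headState N i) (iterSwap N ψ i.1)) =
        (if h : 0 < i.1 then
            tensorState N (headState N ⟨i.1 - 1, by omega⟩) (iterSwap N ψ (i.1 - 1))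
          else 0) +
        (if h : i.1 + 1 < N then
            tensorState N (headState N ⟨i.1 + 1, h⟩) (iterSwap N ψ (i.1 + 1))
          else 0)) := by
  refine ⟨uqiH_mulVec_tensorState_headState, fun v hv ↦ ?_,
    uqiH_mulVec_tensorState_iterSwap ψ⟩
  refine (Submodule.map_span_le (uqiH N).mulVecLin _ _).2 ?_ (Submodule.mem_map_of_mem hv)
  rintro _ ⟨i, rfl⟩
  rw [Matrix.mulVecLin_apply, uqiH_mulVec_tensorState_iterSwap]
  refine add_mem ?_ ?_ <;> split_ifs
  all_goals first | exact Submodule.subset_span ⟨_, rfl⟩ | exact zero_mem _
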